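/- Let e ∈ ℝ, A₀ : ℝ × ℝ³ → ℝ and A : ℝ × ℝ³ → ℝ³ be continuously differentiable, H : ℝ → ℝ³ continuous, and let ψ : ℝ × ℝ³ → (Fin 2 → ℂ) be twice continuously differentiable and satisfy the Pauli equation: for each spinor component k ∈ Fin 2, i·∂ₜψₖ(t,x) = e·A₀(t,x)·ψₖ(t,x) + Σ_{b=1}^{3} (−i∂_{x_b} − e·A_b(t,x))((−i∂_{x_b} − e·A_b(t,·))ψₖ)(t,x) − e·Σ_{j=1}^{3} H_j(t)·(σ_j ψ(t,x))ₖ. Let U : ℝ → Matrix (Fin 2) (Fin 2) ℂ be differentiable with U(t) invertible for all t and i·U'(t) = −e·(H(t)·σ)·U(t). Then the function φ(t,x) = U(t)⁻¹ · ψ(t,x) satisfies, componentwise, the Schrödinger equation without magnetic interaction term: i·∂ₜφₖ(t,x) = e·A₀(t,x)·φₖ(t,x) + Σ_{b=1}^{3} (−i∂_{x_b} − e·A_b(t,x))((−i∂_{x_b} − e·A_b(t,·))φₖ)(t,x) for k ∈ Fin 2. In other words, the change of variables ψ = U(t)·φ transforms the Pauli equation into a system of two uncoupled Schrödinger equations.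 -/

import Mathlib

open Matrix

/-- The first Pauli matrix. -/
noncomputable def sigma1 : Matrix (Fin 2) (Fin 2) ℂ := !![0, 1; 1, 0]

/-- The second Pauli matrix. -/
noncomputable def sigma2 : Matrix (Fin 2) (Fin 2) ℂ := !![0, -Complex.I; Complex.I, 0]

/-- The third Pauli matrix. -/
noncomputable def sigma3 : Matrix (Fin 2) (Fin 2) ℂ := !![1, 0; 0, -1]

/-- The Pauli matrices as a family indexed by `Fin 3`. -/
noncomputable def pauliMat : Fin 3 → Matrix (Fin 2) (Fin 2) ℂ := ![sigma1, sigma2, sigma3]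

/-- For `H ∈ ℝ³`, `H·σ = H₁σ₁ + H₂σ₂ + H₃σ₃`. -/
noncomputable def pauliDot (H : Fin 3 → ℝ) : Matrix (Fin 2) (Fin 2) ℂ :=
  (H 0 : ℂ) • sigma1 + (H 1 : ℂ) • sigma2 + (H 2 : ℂ) • sigma3

/-- Partial derivative `∂_{x_b} f (x)` of a complex-valued function on `ℝ³`. -/
noncomputable def pd (b : Fin 3) (f : (Fin 3 → ℝ) → ℂ) (x : Fin 3 → ℝ) : ℂ :=
  fderiv ℝ f x (Pi.single b 1)

/-- The operator `(-i ∂_{x_b} - e A_b)` applied to a function `f` at `x`. -/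
noncomputable def mom (e : ℝ) (Ab : (Fin 3 → ℝ) → ℝ) (b : Fin 3)
    (f : (Fin 3 → ℝ) → ℂ) (x : Fin 3 → ℝ) : ℂ :=
  -Complex.I * pd b f x - (↑(e * Ab x)) * f x

/-!
Write `V = U⁻¹`. Differentiating `V U = 1` gives `V' = -V U' V`, so the equation for `U` becomes
`i V' = e V (H·σ)`. Hence `i ∂ₜ(V ψ) = e V (H·σ) ψ + V (i ∂ₜ ψ)`, and the first term cancels the
magnetic interaction term of the Pauli equation. What remains is `V` applied to the scalar
Schrödinger operator of `ψ`, and this operator acts on each spinor component separately with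
scalar coefficients, so it commutes with the matrix `V(t)`, which is constant in `x`.
-/

namespace Matrix

section Calculus

variable {𝕜 𝔸 m n p : Type*} [NontriviallyNormedField 𝕜] [NormedRing 𝔸] [NormedAlgebra 𝕜 𝔸]
  [Fintype n] {t : 𝕜}

theorem hasDerivAt_dotProduct {u v : 𝕜 → n → 𝔸} {u' v' : n → 𝔸}
    (hu : ∀ i, HasDerivAt (u · i) (u' i) t) (hv : ∀ i, HasDerivAt (v · i) (v' i) t) :
    HasDerivAt (fun s => u s ⬝ᵥ v s) (u' ⬝ᵥ v t + u t ⬝ᵥ v') t := by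
  simpa only [dotProduct, Finset.sum_add_distrib] using
    HasDerivAt.fun_sum (u := Finset.univ) fun i _ => (hu i).fun_mul (hv i)

theorem hasDerivAt_mul_apply {M : 𝕜 → Matrix m n 𝔸} {N : 𝕜 → Matrix n p 𝔸}
    {M' : Matrix m n 𝔸} {N' : Matrix n p 𝔸}
    (hM : ∀ i j, HasDerivAt (M · i j) (M' i j) t) (hN : ∀ i j, HasDerivAt (N · i j) (N' i j) t)
    (i : m) (j : p) : HasDerivAt (fun s => (M s * N s) i j) ((M' * N t + M t * N') i j) t := by
  simpa only [mul_apply', Matrix.add_apply] using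
    hasDerivAt_dotProduct (fun k => hM i k) (fun k => hN k j)

theorem hasDerivAt_mulVec_apply {M : 𝕜 → Matrix m n 𝔸} {v : 𝕜 → n → 𝔸} {M' : Matrix m n 𝔸}
    {v' : n → 𝔸} (hM : ∀ i j, HasDerivAt (M · i j) (M' i j) t)
    (hv : ∀ i, HasDerivAt (v · i) (v' i) t) (i : m) :
    HasDerivAt (fun s => (M s *ᵥ v s) i) ((M' *ᵥ v t + M t *ᵥ v') i) t :=
  hasDerivAt_dotProduct (hM i) hv

end Calculus

section Inverse

variable {𝕜 𝕜' n : Type*} [NontriviallyNormedField 𝕜] [NormedField 𝕜'] [NormedAlgebra 𝕜 𝕜']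
  [Fintype n] [DecidableEq n] {t : 𝕜} {M : 𝕜 → Matrix n n 𝕜'}

theorem differentiableAt_det (hM : ∀ i j, DifferentiableAt 𝕜 (M · i j) t) :
    DifferentiableAt 𝕜 (fun s => (M s).det) t := by
  simp only [det_apply']
  fun_prop

theorem differentiableAt_adjugate_apply (hM : ∀ i j, DifferentiableAt 𝕜 (M · i j) t) (i j : n) :
    DifferentiableAt 𝕜 (fun s => (M s).adjugate i j) t := by
  simp only [adjugate_apply]
  refine differentiableAt_det fun k l => ?_
  simp only [updateRow_apply]
  split_ifs
  exacts [differentiableAt_const _, hM k l]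

theorem differentiableAt_inv_apply (hM : ∀ i j, DifferentiableAt 𝕜 (M · i j) t)
    (hMt : IsUnit (M t)) (i j : n) : DifferentiableAt 𝕜 (fun s => (M s)⁻¹ i j) t := by
  simp only [inv_def, Ring.inverse_eq_inv', Matrix.smul_apply, smul_eq_mul]
  exact ((differentiableAt_det hM).inv ((isUnit_iff_isUnit_det _).mp hMt).ne_zero).mul
    (differentiableAt_adjugate_apply hM i j)

theorem hasDerivAt_inv_apply {M' : Matrix n n 𝕜'} (hM : ∀ i j, HasDerivAt (M · i j) (M' i j) t)
    (hMt : IsUnit (M t)) (i j : n) :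
    HasDerivAt (fun s => (M s)⁻¹ i j) ((-(M t)⁻¹ * M' * (M t)⁻¹) i j) t := by
  set V' : Matrix n n 𝕜' := of fun i j => deriv (fun s => (M s)⁻¹ i j) t
  have hV : ∀ i j, HasDerivAt (fun s => (M s)⁻¹ i j) (V' i j) t := fun i j =>
    (differentiableAt_inv_apply (fun k l => (hM k l).differentiableAt) hMt i j).hasDerivAt
  have hunit : ∀ᶠ s in nhds t, IsUnit (M s) := by
    simp only [isUnit_iff_isUnit_det, isUnit_iff_ne_zero]
    exact (differentiableAt_det fun k l => (hM k l).differentiableAt).continuousAt.eventually_ne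
      ((isUnit_iff_isUnit_det _).mp hMt).ne_zero
  have hprod : V' * M t + (M t)⁻¹ * M' = 0 := by
    ext i j
    refine (hasDerivAt_mul_apply hV hM i j).unique ?_
    refine (hasDerivAt_const t ((1 : Matrix n n 𝕜') i j)).congr_of_eventuallyEq ?_
    filter_upwards [hunit] with s hs
    rw [nonsing_inv_mul _ ((isUnit_iff_isUnit_det _).mp hs)]
  have hV' : V' = -(M t)⁻¹ * M' * (M t)⁻¹ :=
    calc V' = V' * M t * (M t)⁻¹ := by
          rw [mul_assoc, mul_nonsing_inv _ ((isUnit_iff_isUnit_det _).mp hMt), mul_one]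
      _ = -(M t)⁻¹ * M' * (M t)⁻¹ := by
          rw [eq_neg_of_add_eq_zero_left hprod, neg_mul, neg_mul, neg_mul]
  exact hV' ▸ hV i j

end Inverse

end Matrix

noncomputable def magneticKinetic (e : ℝ) (A : (Fin 3 → ℝ) → Fin 3 → ℝ)
    (f : (Fin 3 → ℝ) → ℂ) (x : Fin 3 → ℝ) : ℂ :=
  ∑ b : Fin 3, mom e (fun y => A y b) b (fun y => mom e (fun z => A z b) b f y) x

theorem mom_dotProduct {ι : Type*} [Fintype ι] {e : ℝ} {Ab : (Fin 3 → ℝ) → ℝ} {b : Fin 3}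
    (c : ι → ℂ) {f : (Fin 3 → ℝ) → ι → ℂ} {x : Fin 3 → ℝ}
    (hf : ∀ l, DifferentiableAt ℝ (f · l) x) :
    mom e Ab b (fun z => c ⬝ᵥ f z) x = c ⬝ᵥ fun l => mom e Ab b (f · l) x := by
  simp only [mom, pd, dotProduct]
  rw [fderiv_fun_sum fun l _ => (hf l).const_mul (c l)]
  simp only [fderiv_const_mul (hf _), _root_.sum_apply, _root_.smul_apply, smul_eq_mul,
    Finset.mul_sum, ← Finset.sum_sub_distrib]
  exact Finset.sum_congr rfl fun l _ => by ring

theorem differentiable_mom {e : ℝ} {Ab : (Fin 3 → ℝ) → ℝ} {b : Fin 3} {f : (Fin 3 → ℝ) → ℂ}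
    (hAb : Differentiable ℝ Ab) (hf : ContDiff ℝ 2 f) : Differentiable ℝ (mom e Ab b f) := by
  have hpd : Differentiable ℝ fun y => fderiv ℝ f y (Pi.single b 1) :=
    ((hf.fderiv_right one_add_one_eq_two.le).clm_apply contDiff_const).differentiable one_ne_zero
  have hf' := hf.differentiable two_ne_zero
  unfold mom pd
  fun_prop

theorem magneticKinetic_mulVec {ι κ : Type*} [Fintype κ] {e : ℝ}
    {A : (Fin 3 → ℝ) → Fin 3 → ℝ} (hA : Differentiable ℝ A) (M : Matrix ι κ ℂ)
    {f : (Fin 3 → ℝ) → κ → ℂ} (hf : ∀ l, ContDiff ℝ 2 (f · l)) (x : Fin 3 → ℝ) (k : ι) :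
    magneticKinetic e A (fun z => (M *ᵥ f z) k) x
      = (M *ᵥ fun l => magneticKinetic e A (f · l) x) k := by
  set c := M k
  have hAb : ∀ b, Differentiable ℝ fun y => A y b := fun b => differentiable_pi.mp hA b
  have hinner : ∀ b, (fun y => mom e (fun z => A z b) b (fun z => c ⬝ᵥ f z) y)
      = fun y => c ⬝ᵥ fun l => mom e (fun z => A z b) b (f · l) y := fun b => funext fun y =>
    mom_dotProduct c fun l => (hf l).differentiable two_ne_zero y
  calc magneticKinetic e A (fun z => c ⬝ᵥ f z) x
      = ∑ b, c ⬝ᵥ fun l => mom e (fun y => A y b) b (mom e (fun z => A z b) b (f · l)) x := by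
        simp only [magneticKinetic, hinner]
        exact Finset.sum_congr rfl fun b _ => mom_dotProduct c fun l =>
          differentiable_mom (hAb b) (hf l) x
    _ = c ⬝ᵥ fun l => magneticKinetic e A (f · l) x := by
        simp only [magneticKinetic, dotProduct, Finset.mul_sum]
        exact Finset.sum_comm

-- `-U⁻¹ * U' * U⁻¹` is the derivative of `U⁻¹`; the two `c • P` terms cancel.
theorem smul_inv_conj_mulVec_add_eq {R n : Type*} [CommRing R] [Fintype n] [DecidableEq n]
    {U U' P : Matrix n n R} {ψ ψ' K : n → R} {z a c : R} (hU : IsUnit U)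
    (hU' : z • U' = (-c) • (P * U)) (hψ' : z • ψ' = a • ψ + K - c • (P *ᵥ ψ)) :
    z • ((-U⁻¹ * U' * U⁻¹) *ᵥ ψ + U⁻¹ *ᵥ ψ') = a • (U⁻¹ *ᵥ ψ) + U⁻¹ *ᵥ K := by
  have hUV : U * U⁻¹ = 1 := mul_nonsing_inv _ ((isUnit_iff_isUnit_det _).mp hU)
  have hconj : z • (-U⁻¹ * U' * U⁻¹) = c • (U⁻¹ * P) :=
    calc z • (-U⁻¹ * U' * U⁻¹) = -U⁻¹ * (z • U') * U⁻¹ := by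
          rw [Matrix.mul_smul, Matrix.smul_mul]
      _ = c • (U⁻¹ * P) := by
          simp only [hU', Matrix.mul_smul, Matrix.smul_mul, mul_assoc, hUV, mul_one, neg_mul,
            mul_neg, neg_smul, neg_neg]
  rw [smul_add, ← mulVec_smul U⁻¹, hψ', ← smul_mulVec, hconj, smul_mulVec, mulVec_sub,
    mulVec_add, mulVec_smul, mulVec_smul, mulVec_mulVec]
  abel

theorem pauliDot_mulVec (H : Fin 3 → ℝ) (v : Fin 2 → ℂ) :
    pauliDot H *ᵥ v = ∑ j, (H j : ℂ) • (pauliMat j *ᵥ v) := by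
  simp only [pauliDot, pauliMat, Fin.sum_univ_three, add_mulVec, smul_mulVec]
  rfl

theorem pauli_to_uncoupled_schrodinger_general
    (e : ℝ) (A0 : ℝ → (Fin 3 → ℝ) → ℝ) (A : ℝ → (Fin 3 → ℝ) → Fin 3 → ℝ)
    (H : ℝ → Fin 3 → ℝ) (ψ : ℝ → (Fin 3 → ℝ) → Fin 2 → ℂ)
    (U : ℝ → Matrix (Fin 2) (Fin 2) ℂ)
    (hA : ContDiff ℝ 1 fun p : ℝ × (Fin 3 → ℝ) => A p.1 p.2)
    (hψ : ContDiff ℝ 2 fun p : ℝ × (Fin 3 → ℝ) => ψ p.1 p.2)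
    (hψeq : ∀ (t : ℝ) (x : Fin 3 → ℝ) (k : Fin 2),
      Complex.I * deriv (fun s => ψ s x k) t
        = (↑(e * A0 t x)) * ψ t x k
          + ∑ b : Fin 3,
              mom e (fun y => A t y b) b
                (fun y => mom e (fun z => A t z b) b (fun z => ψ t z k) y) x
          - (e : ℂ) * ∑ j : Fin 3, (↑(H t j)) * ((pauliMat j).mulVec (ψ t x) k))
    (hUdiff : ∀ i j : Fin 2, Differentiable ℝ fun t => U t i j)
    (hUinv : ∀ t, IsUnit (U t))
    (hUeq : ∀ (t : ℝ) (i j : Fin 2),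
      Complex.I * deriv (fun s => U s i j) t
        = ((-(e : ℂ)) • (pauliDot (H t) * U t)) i j) :
    ∀ (t : ℝ) (x : Fin 3 → ℝ) (k : Fin 2),
      Complex.I * deriv (fun s => ((U s)⁻¹).mulVec (ψ s x) k) t
        = (↑(e * A0 t x)) * ((U t)⁻¹).mulVec (ψ t x) k
          + ∑ b : Fin 3,
              mom e (fun y => A t y b) b
                (fun y => mom e (fun z => A t z b) b
                  (fun z => ((U t)⁻¹).mulVec (ψ t z) k) y) x := by
  intro t x k
  have hψt : ∀ l, HasDerivAt (fun s => ψ s x l) (deriv (fun s => ψ s x l) t) t := fun l =>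
    (((contDiff_pi.mp hψ l).comp (contDiff_id.prodMk contDiff_const)).differentiable
      two_ne_zero t).hasDerivAt
  have hψx : ∀ l, ContDiff ℝ 2 fun z => ψ t z l := fun l =>
    (contDiff_pi.mp hψ l).comp (contDiff_const.prodMk contDiff_id)
  have hAt : Differentiable ℝ (A t) :=
    (hA.comp (contDiff_const.prodMk contDiff_id)).differentiable one_ne_zero
  set U' : Matrix (Fin 2) (Fin 2) ℂ := of fun i j => deriv (fun s => U s i j) t
  have hU' : Complex.I • U' = (-(e : ℂ)) • (pauliDot (H t) * U t) := by
    ext i j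
    exact hUeq t i j
  have hψ' : Complex.I • (fun l => deriv (fun s => ψ s x l) t)
      = ((e * A0 t x : ℝ) : ℂ) • ψ t x + (fun l => magneticKinetic e (A t) (ψ t · l) x)
        - (e : ℂ) • (pauliDot (H t) *ᵥ ψ t x) := by
    funext l
    rw [Pi.smul_apply, smul_eq_mul, hψeq, pauliDot_mulVec]
    simp only [Pi.add_apply, Pi.sub_apply, Pi.smul_apply, Finset.sum_apply, smul_eq_mul]
    rfl
  change _ = _ + magneticKinetic e (A t) (fun z => ((U t)⁻¹ *ᵥ ψ t z) k) x
  have hU : ∀ i j, HasDerivAt (U · i j) (U' i j) t := fun i j => (hUdiff i j t).hasDerivAt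
  rw [(hasDerivAt_mulVec_apply (hasDerivAt_inv_apply hU (hUinv t)) hψt k).deriv,
    magneticKinetic_mulVec hAt _ hψx]
  simpa only [Pi.add_apply, Pi.smul_apply, smul_eq_mul] using
    congrFun (smul_inv_conj_mulVec_add_eq (hUinv t) hU' hψ') k

/-- if `ψ` solves the Pauli equation with spatially homogeneous
magnetic field `H(t)`, and `i U' = -e (H·σ) U` (i.e. `U' = i e (H·σ) U`) with
`U(t)` invertible, then `φ = U(t)⁻¹ ψ` solves, componentwise, the Schrödinger
equation without the magnetic interaction term. -/
theorem pauli_to_uncoupled_schrodinger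
    (e : ℝ) (A0 : ℝ → (Fin 3 → ℝ) → ℝ) (A : ℝ → (Fin 3 → ℝ) → Fin 3 → ℝ)
    (H : ℝ → Fin 3 → ℝ) (ψ : ℝ → (Fin 3 → ℝ) → Fin 2 → ℂ)
    (U : ℝ → Matrix (Fin 2) (Fin 2) ℂ)
    (hA0 : ContDiff ℝ 1 fun p : ℝ × (Fin 3 → ℝ) => A0 p.1 p.2)
    (hA : ContDiff ℝ 1 fun p : ℝ × (Fin 3 → ℝ) => A p.1 p.2)
    (hH : Continuous H)
    (hψ : ContDiff ℝ 2 fun p : ℝ × (Fin 3 → ℝ) => ψ p.1 p.2)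
    (hψeq : ∀ (t : ℝ) (x : Fin 3 → ℝ) (k : Fin 2),
      Complex.I * deriv (fun s => ψ s x k) t
        = (↑(e * A0 t x)) * ψ t x k
          + ∑ b : Fin 3,
              mom e (fun y => A t y b) b
                (fun y => mom e (fun z => A t z b) b (fun z => ψ t z k) y) x
          - (e : ℂ) * ∑ j : Fin 3, (↑(H t j)) * ((pauliMat j).mulVec (ψ t x) k))
    (hUdiff : ∀ i j : Fin 2, Differentiable ℝ fun t => U t i j)
    (hUinv : ∀ t, IsUnit (U t))
    (hUeq : ∀ (t : ℝ) (i j : Fin 2),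
      Complex.I * deriv (fun s => U s i j) t
        = ((-(e : ℂ)) • (pauliDot (H t) * U t)) i j) :
    ∀ (t : ℝ) (x : Fin 3 → ℝ) (k : Fin 2),
      Complex.I * deriv (fun s => ((U s)⁻¹).mulVec (ψ s x) k) t
        = (↑(e * A0 t x)) * ((U t)⁻¹).mulVec (ψ t x) k
          + ∑ b : Fin 3,
              mom e (fun y => A t y b) b
                (fun y => mom e (fun z => A t z b) b
                  (fun z => ((U t)⁻¹).mulVec (ψ t z) k) y) x :=
  pauli_to_uncoupled_schrodinger_general e A0 A H ψ U hA hψ hψeq hUdiff hUinv hUeq
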